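/- arXiv:1611.09252 — 3 statements merged into one kernel-verified Lean document; each statement's English description precedes it below -/
import Mathlib

section
/- Let Ω ⊆ ℝⁿ be a Borel set and c > 0 a constant such that for every partition of Ω into three disjoint Borel sets Ω₁, Ω₂, Ω₃ with Ω₁ ∪ Ω₂ ∪ Ω₃ = Ω, one has vol(Ω₃) ≥ c · d(Ω₁, Ω₂) · min(vol(Ω₁), vol(Ω₂)). Let g : ℝⁿ → ℝⁿ be injective on Ω, L-Lipschitz on Ω, and measure-preserving on Ω (vol(g(S)) = vol(S) for every Borel S ⊆ Ω), and set Ω' = g(Ω). Then for every partition of Ω' into three disjoint Borel sets Ω₁', Ω₂', Ω₃' with Ω₁' ∪ Ω₂' ∪ Ω₃' = Ω', one has vol(Ω₃') ≥ (c/L) · d(Ω₁', Ω₂') · min(vol(Ω₁'), vol(Ω₂')). -/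
/-!
Pull a partition `Ω₁' ∪ Ω₂' ∪ Ω₃'` of `g(Ω)` back to the partition `Ωᵢ = Ω ∩ g⁻¹(Ωᵢ')` of `Ω`.
Measure preservation gives `vol(Ωᵢ) = vol(Ωᵢ')`, and since `g` is `L`-Lipschitz it shrinks
distances by at most the factor `L`, so `d(Ω₁', Ω₂') ≤ L · d(Ω₁, Ω₂)`. The isoperimetric
inequality on `Ω` then reads `vol(Ω₃') ≥ c · d(Ω₁, Ω₂) · min(vol Ω₁', vol Ω₂') ≥
(c / L) · d(Ω₁', Ω₂') · min(vol Ω₁', vol Ω₂')`.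
-/

open MeasureTheory Metric Set

/-- Distance between two sets: `d(A,B) = inf { |x - y| : x ∈ A, y ∈ B }`. -/
noncomputable def setDist {n : ℕ} (A B : Set (EuclideanSpace ℝ (Fin n))) : ℝ :=
  sInf {r : ℝ | ∃ x ∈ A, ∃ y ∈ B, r = dist x y}

theorem ContinuousOn.measurableSet_inter_preimage {α β : Type*} [TopologicalSpace α]
    [MeasurableSpace α] [OpensMeasurableSpace α] [TopologicalSpace β] [MeasurableSpace β]
    [BorelSpace β] {f : α → β} {s : Set α} {t : Set β} (hf : ContinuousOn f s)
    (hs : MeasurableSet s) (ht : MeasurableSet t) : MeasurableSet (s ∩ f ⁻¹' t) := by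
  rw [← Subtype.image_preimage_coe]
  exact (MeasurableEmbedding.subtype_coe hs).measurableSet_image.2
    (hf.domRestrict.measurable ht)

section Pullback

variable {α β : Type*} {g : α → β} {Ω : Set α}

theorem image_inter_preimage_of_subset_image {A : Set β} (hA : A ⊆ g '' Ω) :
    g '' (Ω ∩ g ⁻¹' A) = A := by
  rw [image_inter_preimage, inter_eq_right.2 hA]

theorem inter_preimage_union_union_eq {A B C : Set β} (h : A ∪ B ∪ C = g '' Ω) :
    (Ω ∩ g ⁻¹' A) ∪ (Ω ∩ g ⁻¹' B) ∪ (Ω ∩ g ⁻¹' C) = Ω := by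
  rw [← inter_union_distrib_left, ← inter_union_distrib_left, ← preimage_union,
    ← preimage_union, h, inter_eq_left]
  exact subset_preimage_image g Ω

theorem Disjoint.inter_preimage {A B : Set β} (h : Disjoint A B) :
    Disjoint (Ω ∩ g ⁻¹' A) (Ω ∩ g ⁻¹' B) :=
  (h.preimage g).mono inter_subset_right inter_subset_right

theorem measure_inter_preimage_eq [MeasurableSpace α] [MeasurableSpace β] {μ : Measure α}
    {ν : Measure β} (hg : ∀ S ⊆ Ω, MeasurableSet S → ν (g '' S) = μ S) {A : Set β}
    (hA : A ⊆ g '' Ω) (hm : MeasurableSet (Ω ∩ g ⁻¹' A)) : μ (Ω ∩ g ⁻¹' A) = ν A := by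
  rw [← hg _ inter_subset_left hm, image_inter_preimage_of_subset_image hA]

end Pullback

section SetDist

variable {n : ℕ} {A B : Set (EuclideanSpace ℝ (Fin n))}

theorem setDist_nonneg (A B : Set (EuclideanSpace ℝ (Fin n))) : 0 ≤ setDist A B := by
  apply Real.sInf_nonneg
  rintro r ⟨x, -, y, -, rfl⟩
  exact dist_nonneg

theorem setDist_le_dist {x y : EuclideanSpace ℝ (Fin n)} (hx : x ∈ A) (hy : y ∈ B) :
    setDist A B ≤ dist x y := by
  refine csInf_le ⟨0, ?_⟩ ⟨x, hx, y, hy, rfl⟩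
  rintro r ⟨x, -, y, -, rfl⟩
  exact dist_nonneg

theorem LipschitzOnWith.setDist_image_le {g : EuclideanSpace ℝ (Fin n) → EuclideanSpace ℝ (Fin n)}
    {K : NNReal} {s : Set (EuclideanSpace ℝ (Fin n))} (hg : LipschitzOnWith K g s)
    (hA : A ⊆ s) (hB : B ⊆ s) : setDist (g '' A) (g '' B) ≤ K * setDist A B := by
  rcases A.eq_empty_or_nonempty with rfl | ⟨x, hx⟩
  · simp [setDist]
  rcases B.eq_empty_or_nonempty with rfl | ⟨y, hy⟩
  · simp [setDist]
  rw [setDist, setDist, ← smul_eq_mul, ← Real.sInf_smul_of_nonneg (a := (K : ℝ)) K.2]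
  refine le_csInf ⟨_, _, ⟨x, hx, y, hy, rfl⟩, rfl⟩ ?_
  rintro _ ⟨_, ⟨x, hx, y, hy, rfl⟩, rfl⟩
  exact (setDist_le_dist (mem_image_of_mem g hx) (mem_image_of_mem g hy)).trans
    (hg.dist_le_mul x (hA hx) y (hB hy))

end SetDist

theorem isoperimetry_transfer_general (n : ℕ)
    (Ω : Set (EuclideanSpace ℝ (Fin n))) (hΩ : MeasurableSet Ω)
    (c : ℝ) (hc : 0 < c)
    (hiso : ∀ Ω₁ Ω₂ Ω₃ : Set (EuclideanSpace ℝ (Fin n)),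
      MeasurableSet Ω₁ → MeasurableSet Ω₂ → MeasurableSet Ω₃ →
      Disjoint Ω₁ Ω₂ → Disjoint Ω₁ Ω₃ → Disjoint Ω₂ Ω₃ →
      Ω₁ ∪ Ω₂ ∪ Ω₃ = Ω →
      ENNReal.ofReal (c * setDist Ω₁ Ω₂) * min (volume Ω₁) (volume Ω₂) ≤ volume Ω₃)
    (L : ℝ)
    (g : EuclideanSpace ℝ (Fin n) → EuclideanSpace ℝ (Fin n))
    (hlip : ∀ x ∈ Ω, ∀ y ∈ Ω, dist (g x) (g y) ≤ L * dist x y)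
    (hmp : ∀ S ⊆ Ω, MeasurableSet S → volume (g '' S) = volume S)
    (Ω' : Set (EuclideanSpace ℝ (Fin n))) (hΩ' : Ω' = g '' Ω) :
    ∀ Ω₁' Ω₂' Ω₃' : Set (EuclideanSpace ℝ (Fin n)),
      MeasurableSet Ω₁' → MeasurableSet Ω₂' → MeasurableSet Ω₃' →
      Disjoint Ω₁' Ω₂' → Disjoint Ω₁' Ω₃' → Disjoint Ω₂' Ω₃' →
      Ω₁' ∪ Ω₂' ∪ Ω₃' = Ω' →
      ENNReal.ofReal ((c / L) * setDist Ω₁' Ω₂') * min (volume Ω₁') (volume Ω₂') ≤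
        volume Ω₃' := by
  intro Ω₁' Ω₂' Ω₃' h₁ h₂ h₃ h₁₂ h₁₃ h₂₃ hunion
  subst hΩ'
  rcases le_or_gt L 0 with hL | hL
  · rw [ENNReal.ofReal_of_nonpos (mul_nonpos_of_nonpos_of_nonneg
      (div_nonpos_of_nonneg_of_nonpos hc.le hL) (setDist_nonneg _ _)), zero_mul]
    exact zero_le
  have hg : LipschitzOnWith L.toNNReal g Ω :=
    .of_dist_le_mul (by rwa [Real.coe_toNNReal L hL.le])
  have hpull : ∀ {A}, MeasurableSet A → MeasurableSet (Ω ∩ g ⁻¹' A) :=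
    hg.continuousOn.measurableSet_inter_preimage hΩ
  have hsub₁ : Ω₁' ⊆ g '' Ω := hunion ▸ subset_union_left.trans subset_union_left
  have hsub₂ : Ω₂' ⊆ g '' Ω := hunion ▸ subset_union_right.trans subset_union_left
  have hsub₃ : Ω₃' ⊆ g '' Ω := hunion ▸ subset_union_right
  have hdist : c / L * setDist Ω₁' Ω₂' ≤ c * setDist (Ω ∩ g ⁻¹' Ω₁') (Ω ∩ g ⁻¹' Ω₂') := by
    have := hg.setDist_image_le (inter_subset_left (t := g ⁻¹' Ω₁'))
      (inter_subset_left (t := g ⁻¹' Ω₂'))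
    rw [image_inter_preimage_of_subset_image hsub₁, image_inter_preimage_of_subset_image hsub₂,
      Real.coe_toNNReal L hL.le] at this
    rw [div_mul_eq_mul_div, div_le_iff₀ hL, mul_assoc, mul_comm _ L]
    gcongr
  calc ENNReal.ofReal (c / L * setDist Ω₁' Ω₂') * min (volume Ω₁') (volume Ω₂')
      ≤ ENNReal.ofReal (c * setDist (Ω ∩ g ⁻¹' Ω₁') (Ω ∩ g ⁻¹' Ω₂')) *
          min (volume (Ω ∩ g ⁻¹' Ω₁')) (volume (Ω ∩ g ⁻¹' Ω₂')) := by
        rw [measure_inter_preimage_eq hmp hsub₁ (hpull h₁),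
          measure_inter_preimage_eq hmp hsub₂ (hpull h₂)]
        gcongr
    _ ≤ volume (Ω ∩ g ⁻¹' Ω₃') := hiso _ _ _ (hpull h₁) (hpull h₂) (hpull h₃)
        h₁₂.inter_preimage h₁₃.inter_preimage h₂₃.inter_preimage
        (inter_preimage_union_union_eq hunion)
    _ = volume Ω₃' := measure_inter_preimage_eq hmp hsub₃ (hpull h₃)

/-- an isoperimetric inequality with constant `c` transfers, through an
injective `L`-Lipschitz measure-preserving map `g`, to the image `Ω' = g(Ω)` with the
constant `c/L`. -/
theorem isoperimetry_transfer (n : ℕ)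
    (Ω : Set (EuclideanSpace ℝ (Fin n))) (hΩ : MeasurableSet Ω)
    (c : ℝ) (hc : 0 < c)
    (hiso : ∀ Ω₁ Ω₂ Ω₃ : Set (EuclideanSpace ℝ (Fin n)),
      MeasurableSet Ω₁ → MeasurableSet Ω₂ → MeasurableSet Ω₃ →
      Disjoint Ω₁ Ω₂ → Disjoint Ω₁ Ω₃ → Disjoint Ω₂ Ω₃ →
      Ω₁ ∪ Ω₂ ∪ Ω₃ = Ω →
      ENNReal.ofReal (c * setDist Ω₁ Ω₂) * min (volume Ω₁) (volume Ω₂) ≤ volume Ω₃)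
    (L : ℝ)
    (g : EuclideanSpace ℝ (Fin n) → EuclideanSpace ℝ (Fin n))
    (hinj : Set.InjOn g Ω)
    (hlip : ∀ x ∈ Ω, ∀ y ∈ Ω, dist (g x) (g y) ≤ L * dist x y)
    (hmp : ∀ S ⊆ Ω, MeasurableSet S → volume (g '' S) = volume S)
    (Ω' : Set (EuclideanSpace ℝ (Fin n))) (hΩ' : Ω' = g '' Ω) :
    ∀ Ω₁' Ω₂' Ω₃' : Set (EuclideanSpace ℝ (Fin n)),
      MeasurableSet Ω₁' → MeasurableSet Ω₂' → MeasurableSet Ω₃' →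
      Disjoint Ω₁' Ω₂' → Disjoint Ω₁' Ω₃' → Disjoint Ω₂' Ω₃' →
      Ω₁' ∪ Ω₂' ∪ Ω₃' = Ω' →
      ENNReal.ofReal ((c / L) * setDist Ω₁' Ω₂') * min (volume Ω₁') (volume Ω₂') ≤
        volume Ω₃' :=
  isoperimetry_transfer_general n Ω hΩ c hc hiso L g hlip hmp Ω' hΩ'
end

section
/- Let n ≥ 1, let J : ℝ → Matrix (Fin n) (Fin n) ℝ, let A be an n×n real matrix, and let t₀ ∈ ℝ. If J has derivative A · J(t₀) at t₀ (i.e., HasDerivAt J (A * J t₀) t₀), then the function t ↦ det(J(t)) has derivative trace(A) · det(J(t₀)) at t₀. -/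
open Matrix

/-- The determinant as a continuous multilinear map in the rows, in finite dimension. -/
noncomputable def detCMM (n : ℕ) :
    ContinuousMultilinearMap ℝ (fun _ : Fin n => (Fin n → ℝ)) ℝ :=
  (Matrix.detRowAlternating (n := Fin n) (R := ℝ)).toMultilinearMap.mkContinuous
    (n.factorial : ℝ) (by
      intro m
      classical
      have : (Matrix.detRowAlternating (n := Fin n) (R := ℝ)).toMultilinearMap m
          = Matrix.det (Matrix.of m) := rfl
      rw [this, Matrix.det_apply]
      refine le_trans (norm_sum_le _ _) ?_
      have hcard : (Finset.univ : Finset (Equiv.Perm (Fin n))).card = n.factorial := by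
        simp [Fintype.card_perm]
      calc ∑ σ : Equiv.Perm (Fin n), ‖Equiv.Perm.sign σ • ∏ i, Matrix.of m (σ i) i‖
          ≤ ∑ σ : Equiv.Perm (Fin n), ∏ i, ‖m i‖ := by
            refine Finset.sum_le_sum fun σ _ => ?_
            have h1 : ‖Equiv.Perm.sign σ • ∏ i, Matrix.of m (σ i) i‖
                = ‖∏ i, Matrix.of m (σ i) i‖ := by
              rcases Int.units_eq_one_or (Equiv.Perm.sign σ) with h | h <;> simp [h]
            rw [h1]
            calc ‖∏ i, Matrix.of m (σ i) i‖ ≤ ∏ i, ‖m (σ i)‖ := by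
                  rw [norm_prod]
                  exact Finset.prod_le_prod (fun _ _ => norm_nonneg _)
                    (fun i _ => norm_le_pi_norm (m (σ i)) i)
              _ = ∏ i, ‖m i‖ := Equiv.prod_comp σ fun i => ‖m i‖
        _ = (n.factorial : ℝ) * ∏ i, ‖m i‖ := by
            rw [Finset.sum_const, hcard, nsmul_eq_mul])

/-- If a matrix-valued function `J` satisfies `J'(t₀) = A · J(t₀)` (entrywise),
then `(det ∘ J)'(t₀) = trace(A) · det(J(t₀))`. -/
theorem hasDerivAt_det_of_hasDerivAt_mul (n : ℕ) (hn : 1 ≤ n)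
    (J : ℝ → Matrix (Fin n) (Fin n) ℝ) (A : Matrix (Fin n) (Fin n) ℝ) (t₀ : ℝ)
    (hJ : ∀ i j, HasDerivAt (fun t => J t i j) ((A * J t₀) i j) t₀) :
    HasDerivAt (fun t => (J t).det) (A.trace * (J t₀).det) t₀ := by
  classical
  -- J as a function to rows
  have hrows : HasDerivAt (fun t => (fun i => J t i : Fin n → Fin n → ℝ))
      (fun i => (A * J t₀) i) t₀ := by
    rw [hasDerivAt_pi]
    intro i
    rw [hasDerivAt_pi]
    exact fun j => hJ i j
  have hF : HasFDerivAt (detCMM n) ((detCMM n).linearDeriv (fun i => J t₀ i))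
      (fun i => J t₀ i) := (detCMM n).hasFDerivAt _
  have hcomp := hF.comp_hasDerivAt t₀ hrows
  have heq : (detCMM n).linearDeriv (fun i => J t₀ i) (fun i => (A * J t₀) i)
      = A.trace * (J t₀).det := by
    rw [ContinuousMultilinearMap.linearDeriv_apply]
    have hterm : ∀ i : Fin n,
        (detCMM n) (Function.update (fun i => J t₀ i) i ((A * J t₀) i))
          = A i i * (J t₀).det := by
      intro i
      have h1 : (detCMM n) (Function.update (fun i => J t₀ i) i ((A * J t₀) i))
          = ((J t₀).updateRow i ((A * J t₀) i)).det := rfl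
      rw [h1]
      have h2 : (A * J t₀) i = ∑ k, A i k • J t₀ k := by
        funext j
        simp [Matrix.mul_apply, Finset.sum_apply]
      rw [h2, Matrix.det_updateRow_sum]
      simp [smul_eq_mul]
    rw [Finset.sum_congr rfl fun i _ => hterm i, ← Finset.sum_mul, Matrix.trace]
    rfl
  rw [heq] at hcomp
  exact hcomp
end

section
/- Let n ≥ 1 and let v : ℝ × ℝⁿ → ℝⁿ be continuously differentiable and divergence-free in the spatial variable: for every (t, x), the trace of the spatial Fréchet derivative D_x v(t, x) is zero. Let Φ : ℝ × ℝⁿ → ℝⁿ be twice continuously differentiable (ContDiff ℝ 2 as a function of the joint variable) and satisfy ∂_t Φ(t, x) = v(t, Φ(t, x)) for all (t, x), and Φ(0, x) = x for all x. Then for every t ∈ ℝ and x ∈ ℝⁿ, the spatial Jacobian determinant satisfies det(D_x Φ(t, x)) = 1; in particular, the time-one map u(x) = Φ(1, x) satisfies det(D_x u) = 1 for all x, i.e., u is measure-preserving. -/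
open Function

/-! Along a trajectory, `J t = D_x Φ(t, x)` solves the variational equation
`J' = D_x v(t, Φ(t, x)) ∘ J` (the mixed partial derivatives of the `C²` map `Φ` commute), so by
Jacobi's formula `(det J)' = tr (D_x v) · det J = 0`. Hence `det J` is constant in `t`, equal to
its value `det (D_x id) = 1` at `t = 0`. -/

theorem Matrix.hasDerivAt_det_one_add_smul {𝕜 n : Type*} [NontriviallyNormedField 𝕜]
    [Fintype n] [DecidableEq n] (M : Matrix n n 𝕜) :
    HasDerivAt (fun r : 𝕜 => (1 + r • M).det) M.trace 0 := by
  rw [funext fun r : 𝕜 => Matrix.det_one_add_smul r M]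
  set q := (det (1 + (Polynomial.X : Polynomial 𝕜) • M.map Polynomial.C)).divX.divX
  have := (((hasDerivAt_id' (0 : 𝕜)).const_mul M.trace).const_add 1).fun_add
    ((q.hasDerivAt 0).fun_mul (hasDerivAt_pow 2 (0 : 𝕜)))
  simpa using this

namespace ContinuousLinearMap

variable {𝕜 E : Type*} [NontriviallyNormedField 𝕜] [NormedAddCommGroup E] [NormedSpace 𝕜 E]
  [FiniteDimensional 𝕜 E]

theorem hasDerivAt_det_one_add_smul (B : E →L[𝕜] E) :
    HasDerivAt (fun r : 𝕜 => (1 + r • B).det) (LinearMap.trace 𝕜 E B) 0 := by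
  classical
  let b := Module.finBasis 𝕜 E
  have hmatrix (r : 𝕜) : (1 + r • B).det = (1 + r • LinearMap.toMatrix b b B).det := by
    rw [det, ← LinearMap.det_toMatrix b]
    simp
  simp_rw [hmatrix, LinearMap.trace_eq_matrix_trace 𝕜 b]
  exact Matrix.hasDerivAt_det_one_add_smul _

variable [CompleteSpace 𝕜]

theorem differentiable_det : Differentiable 𝕜 (fun A : E →L[𝕜] E => A.det) := by
  classical
  let b := Module.finBasis 𝕜 E
  have entry (i j) : Differentiable 𝕜 fun A : E →L[𝕜] E => LinearMap.toMatrix b b A i j :=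
    (Matrix.entryLinearMap 𝕜 𝕜 i j ∘ₗ (LinearMap.toMatrix b b).toLinearMap ∘ₗ
      coeLM 𝕜).toContinuousLinearMap.differentiable
  simp_rw [det, ← LinearMap.det_toMatrix b, Matrix.det_apply']
  fun_prop

theorem fderiv_det_apply_comp (A B : E →L[𝕜] E) :
    fderiv 𝕜 (fun A : E →L[𝕜] E => A.det) A (B ∘L A) = LinearMap.trace 𝕜 E B * A.det := by
  have hline : HasDerivAt (fun r : 𝕜 => (A + r • (B ∘L A)).det)
      (fderiv 𝕜 (fun A : E →L[𝕜] E => A.det) A (B ∘L A)) 0 := by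
    have := (differentiable_det A).hasFDerivAt.comp_hasDerivAt_of_eq (0 : 𝕜)
      (((hasDerivAt_id (0 : 𝕜)).smul_const (B ∘L A)).const_add A) (by simp)
    simpa [Function.comp_def] using this
  have hfactor (r : 𝕜) : (A + r • (B ∘L A)).det = (1 + r • B).det * A.det := by
    rw [show A + r • (B ∘L A) = (1 + r • B) ∘L A by ext; simp [add_comp]]
    exact LinearMap.det_comp _ _
  simp_rw [hfactor] at hline
  exact hline.unique ((hasDerivAt_det_one_add_smul B).mul_const _)

end ContinuousLinearMap

theorem HasDerivAt.det_of_eq_comp {𝕜 E : Type*} [NontriviallyNormedField 𝕜] [CompleteSpace 𝕜]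
    [NormedAddCommGroup E] [NormedSpace 𝕜 E] [FiniteDimensional 𝕜 E]
    {J : 𝕜 → E →L[𝕜] E} {B : E →L[𝕜] E} {t : 𝕜} (hJ : HasDerivAt J (B ∘L J t) t) :
    HasDerivAt (fun s => (J s).det) (LinearMap.trace 𝕜 E B * (J t).det) t := by
  rw [← ContinuousLinearMap.fderiv_det_apply_comp]
  exact (ContinuousLinearMap.differentiable_det (J t)).hasFDerivAt.comp_hasDerivAt t hJ

theorem Differentiable.uncurry_left {𝕜 E F G : Type*} [NontriviallyNormedField 𝕜]
    [NormedAddCommGroup E] [NormedSpace 𝕜 E] [NormedAddCommGroup F] [NormedSpace 𝕜 F]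
    [NormedAddCommGroup G] [NormedSpace 𝕜 G] {f : E → F → G} (x : E)
    (h : Differentiable 𝕜 (uncurry f)) : Differentiable 𝕜 (f x) :=
  h.comp ((differentiable_const x).prodMk differentiable_id)

open ContinuousLinearMap in
theorem hasDerivAt_fderiv_of_contDiff_uncurry {𝕜 E F : Type*} [RCLike 𝕜]
    [NormedAddCommGroup E] [NormedSpace 𝕜 E] [NormedAddCommGroup F] [NormedSpace 𝕜 F]
    {Φ : 𝕜 → E → F} (hΦ : ContDiff 𝕜 2 (uncurry Φ)) (t : 𝕜) (x : E) :
    HasDerivAt (fun s => fderiv 𝕜 (Φ s) x) (fderiv 𝕜 (fun y => deriv (fun s => Φ s y) t) x) t := by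
  have hf : Differentiable 𝕜 (uncurry Φ) := hΦ.differentiable two_ne_zero
  have hDf : Differentiable 𝕜 (fderiv 𝕜 (uncurry Φ)) :=
    (hΦ.fderiv_right le_rfl).differentiable one_ne_zero
  have time_curve (s : 𝕜) (y : E) : HasDerivAt (fun r : 𝕜 => (r, y)) ((1 : 𝕜), (0 : E)) s :=
    (hasDerivAt_id s).prodMk (hasDerivAt_const s y)
  have partial_x (s : 𝕜) (y : E) :
      HasFDerivAt (Φ s) (fderiv 𝕜 (uncurry Φ) (s, y) ∘L inr 𝕜 𝕜 E) y :=
    (hf (s, y)).hasFDerivAt.comp y (hasFDerivAt_prodMk_right s y)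
  have partial_t (y : E) :
      HasDerivAt (fun s => Φ s y) (fderiv 𝕜 (uncurry Φ) (t, y) (1, 0)) t := by
    simpa [comp_def] using (hf (t, y)).hasFDerivAt.comp_hasDerivAt t (time_curve t y)
  have hJ : (fun s => fderiv 𝕜 (Φ s) x) = fun s => fderiv 𝕜 (uncurry Φ) (s, x) ∘L inr 𝕜 𝕜 E :=
    funext fun s => (partial_x s x).fderiv
  have hvel : (fun y => deriv (fun s => Φ s y) t) = fun y => fderiv 𝕜 (uncurry Φ) (t, y) (1, 0) :=
    funext fun y => (partial_t y).deriv
  rw [hJ, hvel]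
  set D2 := fderiv 𝕜 (fderiv 𝕜 (uncurry Φ)) (t, x)
  have h_t : HasDerivAt (fun s => fderiv 𝕜 (uncurry Φ) (s, x) ∘L inr 𝕜 𝕜 E)
      (D2 (1, 0) ∘L inr 𝕜 𝕜 E) t := by
    have hDf_t : HasDerivAt (fun s => fderiv 𝕜 (uncurry Φ) (s, x)) (D2 (1, 0)) t :=
      (hDf (t, x)).hasFDerivAt.comp_hasDerivAt t (time_curve t x)
    have := hDf_t.clm_comp (hasDerivAt_const t (inr 𝕜 𝕜 E))
    rwa [comp_zero, add_zero] at this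
  have h_x : HasFDerivAt (fun y => fderiv 𝕜 (uncurry Φ) (t, y) (1, 0))
      ((D2 ∘L inr 𝕜 𝕜 E).flip (1, 0)) x := by
    have := ((hDf (t, x)).hasFDerivAt.comp x (hasFDerivAt_prodMk_right t x)).clm_apply
      (hasFDerivAt_const ((1 : 𝕜), (0 : E)) x)
    rwa [comp_zero, zero_add] at this
  have hsymm : IsSymmSndFDerivAt 𝕜 (uncurry Φ) (t, x) :=
    hΦ.contDiffAt.isSymmSndFDerivAt (by simp)
  rw [h_x.fderiv]
  convert h_t using 1
  ext w
  exact hsymm _ _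

theorem jacobian_det_one_of_divergence_free_general (n : ℕ)
    (v Φ : ℝ → EuclideanSpace ℝ (Fin n) → EuclideanSpace ℝ (Fin n))
    (hv : ContDiff ℝ 1 (Function.uncurry v))
    (hdiv : ∀ (t : ℝ) (x : EuclideanSpace ℝ (Fin n)),
      LinearMap.trace ℝ (EuclideanSpace ℝ (Fin n)) (fderiv ℝ (v t) x).toLinearMap = 0)
    (hΦ : ContDiff ℝ 2 (Function.uncurry Φ))
    (hode : ∀ (t : ℝ) (x : EuclideanSpace ℝ (Fin n)),
      HasDerivAt (fun s => Φ s x) (v t (Φ t x)) t)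
    (h0 : ∀ x, Φ 0 x = x) :
    (∀ (t : ℝ) (x : EuclideanSpace ℝ (Fin n)), (fderiv ℝ (Φ t) x).det = 1) ∧
    (∀ x : EuclideanSpace ℝ (Fin n), (fderiv ℝ (fun y => Φ 1 y) x).det = 1) := by
  have variational (t : ℝ) (x : EuclideanSpace ℝ (Fin n)) : HasDerivAt
      (fun s => fderiv ℝ (Φ s) x) (fderiv ℝ (v t) (Φ t x) ∘L fderiv ℝ (Φ t) x) t := by
    have hflow : (fun y => deriv (fun s => Φ s y) t) = v t ∘ Φ t :=
      funext fun y => (hode t y).deriv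
    have hvt := (hv.differentiable one_ne_zero).uncurry_left t
    have hΦt := (hΦ.differentiable two_ne_zero).uncurry_left t
    rw [← fderiv_comp x (hvt _) (hΦt x), ← hflow]
    exact hasDerivAt_fderiv_of_contDiff_uncurry hΦ t x
  have det_one (t : ℝ) (x : EuclideanSpace ℝ (Fin n)) : (fderiv ℝ (Φ t) x).det = 1 := by
    have hconst (s : ℝ) : HasDerivAt (fun s => (fderiv ℝ (Φ s) x).det) 0 s := by
      simpa [hdiv] using (variational s x).det_of_eq_comp
    rw [is_const_of_deriv_eq_zero (fun s => (hconst s).differentiableAt)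
      (fun s => (hconst s).deriv) t 0, show Φ 0 = id from funext h0, fderiv_id]
    exact LinearMap.det_id
  exact ⟨det_one, det_one 1⟩

/-- If `v` is `C¹` and divergence-free in space, and `Φ` is a `C²` flow of `v`
with `Φ(0,·) = id`, then the spatial Jacobian determinant of `Φ(t,·)` is identically `1`;
in particular the time-one map `u = Φ(1,·)` is measure-preserving. -/
theorem jacobian_det_one_of_divergence_free (n : ℕ) (hn : 1 ≤ n)
    (v Φ : ℝ → EuclideanSpace ℝ (Fin n) → EuclideanSpace ℝ (Fin n))
    (hv : ContDiff ℝ 1 (Function.uncurry v))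
    (hdiv : ∀ (t : ℝ) (x : EuclideanSpace ℝ (Fin n)),
      LinearMap.trace ℝ (EuclideanSpace ℝ (Fin n)) (fderiv ℝ (v t) x).toLinearMap = 0)
    (hΦ : ContDiff ℝ 2 (Function.uncurry Φ))
    (hode : ∀ (t : ℝ) (x : EuclideanSpace ℝ (Fin n)),
      HasDerivAt (fun s => Φ s x) (v t (Φ t x)) t)
    (h0 : ∀ x, Φ 0 x = x) :
    (∀ (t : ℝ) (x : EuclideanSpace ℝ (Fin n)), (fderiv ℝ (Φ t) x).det = 1) ∧
    (∀ x : EuclideanSpace ℝ (Fin n), (fderiv ℝ (fun y => Φ 1 y) x).det = 1) :=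
  jacobian_det_one_of_divergence_free_general n v Φ hv hdiv hΦ hode h0
end
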